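/- Let M be a meta-decomposition of an acyclic hypergraph. If a non-root node p of M has λ(p) = ∅ and κ(p) = χ(p), then its parent q satisfies λ(q) ≠ ∅ or κ(q) ≠ χ(q). That is, a minor node whose κ-label equals its χ-label cannot have a parent that is also a minor node with κ equal to χ. -/
import Mathlib


/-- `x` lies in the subtree of the tree `G` rooted at `r` hanging below `p`. -/
def inSubtree {V : Type*} (G : SimpleGraph V) (r p x : V) : Prop :=
  ∀ W : G.Walk x r, W.IsPath → p ∈ W.support

/-- `q` is the parent of `p` in the tree `G` rooted at `r`. -/
def isParent {V : Type*} (G : SimpleGraph V) (r q p : V) : Prop :=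
  G.Adj q p ∧ ∀ W : G.Walk p r, W.IsPath → q ∈ W.support

/-- Let `M` be a meta-decomposition of an acyclic hypergraph: a rooted labeled
tree with labels `λ` (possibly empty sets of hyperedges) and `χ, κ` (sets of
attributes), satisfying: the interface condition `κ(p) = χ(p) ∩ χ(q) ⊆ χ(q)`
for each non-root `p` with parent `q`; the uniqueness condition (C5); condition
(C4b); nonempty `χ`-labels; `κ(root) = ∅` and `χ(root) ≠ ∅`.  If a non-root
node `p` has `λ(p) = ∅` and `κ(p) = χ(p)`, then its parent `q` satisfies
`λ(q) ≠ ∅` or `κ(q) ≠ χ(q)`. -/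
theorem stmt_13 {V A B : Type*} (G : SimpleGraph V) (r : V) (hG : G.IsTree)
    (lam : V → Set B) (χ κ : V → Set A)
    (hχ : ∀ p : V, (χ p).Nonempty)
    (hroot : κ r = ∅) (hrootχ : χ r ≠ ∅)
    (hκ : ∀ p q : V, isParent G r q p → κ p = χ p ∩ χ q)
    (hc4b : ∀ p q : V, isParent G r q p → κ p ≠ χ q →
      ∀ s : V, ¬ inSubtree G r q s → ¬ κ p ⊆ χ s)
    (hc5 : ∀ k : Set A, (∃ p q : V, p ≠ q ∧ κ p = k ∧ κ q = k) →
      ∃! m : V, lam m = ∅ ∧ χ m = k)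
    (p : V) (hp : p ≠ r) (hlam : lam p = ∅) (hk : κ p = χ p)
    (q : V) (hq : isParent G r q p) :
    lam q ≠ ∅ ∨ κ q ≠ χ q := by
  by_contra hcon
  push_neg at hcon
  obtain ⟨hlamq, hkq⟩ := hcon
  by_cases hqr : q = r
  · subst hqr
    exact hrootχ (hkq ▸ hroot)
  -- q ≠ r: build the parent q' of q
  classical
  obtain ⟨W0⟩ := hG.isConnected.preconnected q r
  obtain ⟨Pv, hPv⟩ := W0.toPath
  have hWuniq : ∀ W : G.Walk q r, W.IsPath → W = Pv := fun W hW =>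
    congrArg Subtype.val (hG.IsAcyclic.path_unique ⟨W, hW⟩ ⟨Pv, hPv⟩)
  cases Pv with
  | nil => exact hqr rfl
  | cons h P' =>
    rename_i q'
    have hP'path : P'.IsPath := hPv.of_cons
    have hqnot : q ∉ P'.support := ((SimpleGraph.Walk.cons_isPath_iff h P').mp hPv).2
    have hparent : isParent G r q' q := by
      refine ⟨h.symm, ?_⟩
      intro W hW
      have := hWuniq W hW
      rw [this]
      simp [SimpleGraph.Walk.support_cons]
    have hnotsub : ¬ inSubtree G r q q' := by
      intro hsub
      exact hqnot (hsub P' hP'path)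
    -- κ p ⊆ χ q
    have hsub1 : κ p ⊆ χ q := by
      rw [hκ p q hq]; exact Set.inter_subset_right
    by_cases hkpq : κ p = χ q
    · -- p and q share κ-value χ q; use C5
      have hkq2 : κ q = χ q := hkq
      have hpq : p ≠ q := (hq.1.ne).symm
      obtain ⟨m, _, hm⟩ := hc5 (χ q) ⟨p, q, hpq, hkpq, hkq2⟩
      have h1 : p = m := hm p ⟨hlam, hk ▸ hkpq⟩
      have h2 : q = m := hm q ⟨hlamq, rfl⟩
      exact hpq (h1.trans h2.symm)
    · -- use C4b with s = q'
      have hχqq' : χ q ⊆ χ q' := by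
        have := hκ q q' hparent
        rw [← hkq] at this ⊢
        rw [this]; exact Set.inter_subset_right
      exact hc4b p q hq hkpq q' hnotsub (hsub1.trans hχqq')
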